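/- arXiv:1602.02120 — 5 statements merged into one kernel-verified Lean document; each statement's English description precedes it below -/
import Mathlib

section
/- The AVL join algorithm on trees T_L and T_R performs O(|h(T_L) − h(T_R)|) work: the number of nodes visited plus rotations performed is at most a constant times |h(T_L) − h(T_R)| + 1. -/
inductive BT (α : Type) : Type
  | leaf : BT α
  | node : BT α → α → BT α → BT α

namespace BT

def size {α : Type} : BT α → ℕ
  | leaf => 0
  | node l _ r => size l + size r + 1

def height {α : Type} : BT α → ℕ
  | leaf => 0
  | node l _ r => max (height l) (height r) + 1

def AVL {α : Type} : BT α → Prop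
  | leaf => True
  | node l _ r => AVL l ∧ AVL r ∧ height l ≤ height r + 1 ∧ height r ≤ height l + 1

/-- Number of nodes visited descending the right spine of `t` until reaching a
subtree of height at most `h0 + 1` (the descent performed by the AVL join
algorithm when `t` is the taller tree and `h0` the height of the shorter). -/
def rightSpineVisits {α : Type} : BT α → ℕ → ℕ
  | leaf, _ => 0
  | node l v r, h0 =>
      if height (node l v r) ≤ h0 + 1 then 1 else 1 + rightSpineVisits r h0

/-- Symmetric descent along the left spine. -/
def leftSpineVisits {α : Type} : BT α → ℕ → ℕ
  | leaf, _ => 0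
  | node l v r, h0 =>
      if height (node l v r) ≤ h0 + 1 then 1 else 1 + leftSpineVisits l h0

/-- Nodes visited by the AVL join algorithm on input trees `l`, `r`. -/
def joinVisits {α : Type} (l r : BT α) : ℕ :=
  if height r + 1 < height l then rightSpineVisits l (height r)
  else if height l + 1 < height r then leftSpineVisits r (height l)
  else 1

end BT

lemma BT.rightSpineVisits_le {α : Type} (t : BT α) (h0 : ℕ) :
    BT.rightSpineVisits t h0 ≤ BT.height t - h0 + 1 := by
  induction t with
  | leaf => simp [BT.rightSpineVisits]
  | node l v r ihl ihr =>
    rw [BT.rightSpineVisits]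
    split
    · omega
    · have h1 : BT.height r + 1 ≤ BT.height (BT.node l v r) := by
        simp [BT.height]
      omega

lemma BT.leftSpineVisits_le {α : Type} (t : BT α) (h0 : ℕ) :
    BT.leftSpineVisits t h0 ≤ BT.height t - h0 + 1 := by
  induction t with
  | leaf => simp [BT.leftSpineVisits]
  | node l v r ihl ihr =>
    rw [BT.leftSpineVisits]
    split
    · omega
    · have h1 : BT.height l + 1 ≤ BT.height (BT.node l v r) := by
        simp [BT.height]
      omega

/-- The AVL join algorithm performs `O(|h(T_L) − h(T_R)|)` work: the number of
nodes visited plus the (at most two) rotations performed is at most a constant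
times `|h(T_L) − h(T_R)| + 1`. -/
theorem avl_join_work {α : Type} :
    ∃ c : ℕ, ∀ TL TR : BT α, BT.AVL TL → BT.AVL TR →
      BT.joinVisits TL TR + 2 ≤ c * (Nat.dist (BT.height TL) (BT.height TR) + 1) := by
  refine ⟨3, fun TL TR _ _ => ?_⟩
  rw [BT.joinVisits, Nat.dist]
  have h1 := BT.rightSpineVisits_le TL (BT.height TR)
  have h2 := BT.leftSpineVisits_le TR (BT.height TL)
  split
  · omega
  · split <;> omega
end

section
/- If α ≤ 1 − 1/√2, then for any α-weight-balanced trees A, B, C, D where B is balanced with C, A is balanced with B∪C (the combined tree), the subtree A∪B∪C is too heavy relative to D (i.e., w(A)+w(B)+w(C) > β·w(D) where β = 1/α − 1), and w(A)+w(B)+w(C) < (1 + β + 1/β)·w(D), then at least one of a single right rotation or a double rotation restores the α-weight-balance invariant for the subtree combining A, B, C, D. -/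
set_option maxHeartbeats 1000000


/-- Two weights `x`, `y` are "like" (balanced) for parameter `β`:
`(1/β)·y ≤ x ≤ β·y`. -/
def LikeW (β x y : ℝ) : Prop := x ≤ β * y ∧ y ≤ β * x

/-- Rebalancing lemma for weight-balanced trees: with `α ≤ 1 − 1/√2` and
`β = 1/α − 1 = (1−α)/α`, if `B` is balanced with `C`, `A` is balanced with
`B∪C`, the combined tree `A∪B∪C` is too heavy relative to `D`
(`a+b+c > β·d`), and `a+b+c < (1 + β + 1/β)·d`, then either a single right
rotation (producing nodes `(B∪C, D)` and `(A, (B∪C)∪D)`) or a double rotation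
(producing nodes `(A,B)`, `(C,D)` and `(A∪B, C∪D)`) restores the
weight-balance invariant at every newly formed node.  Here `a,b,c,d ≥ 1` are
the weights of the trees `A,B,C,D`. -/
theorem wb_rotation_rebalance (α : ℝ) (hα₀ : 0 < α) (hα₁ : α ≤ 1 - 1 / Real.sqrt 2)
    (a b c d : ℝ) (ha : 1 ≤ a) (hb : 1 ≤ b) (hc : 1 ≤ c) (hd : 1 ≤ d)
    (β : ℝ) (hβ : β = (1 - α) / α)
    (hBC : LikeW β b c)
    (hABC : LikeW β a (b + c))
    (hheavy : β * d < a + b + c)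
    (hlight : a + b + c < (1 + β + 1 / β) * d) :
    (LikeW β (b + c) d ∧ LikeW β a (b + c + d)) ∨
    (LikeW β a b ∧ LikeW β c d ∧ LikeW β (a + b) (c + d)) := by
  obtain ⟨h1, h2⟩ := hBC
  obtain ⟨h3, h4⟩ := hABC
  -- β ≥ 1 + √2
  have hs2 : (Real.sqrt 2) ^ 2 = 2 := Real.sq_sqrt (by norm_num)
  have hs1 : 1 < Real.sqrt 2 := by nlinarith [Real.sqrt_nonneg 2]
  have hβge : 1 + Real.sqrt 2 ≤ β := by
    rw [hβ, le_div_iff₀ hα₀]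
    have h1s : 1 / Real.sqrt 2 = Real.sqrt 2 / 2 := by
      rw [div_eq_div_iff (by positivity) (by norm_num)]
      nlinarith
    rw [h1s] at hα₁
    nlinarith [Real.sqrt_nonneg 2]
  have hq : (0:ℝ) ≤ β * β - 2 * β - 1 := by nlinarith
  have hβ2 : 2 ≤ β := by nlinarith
  have hβpos : 0 < β := by linarith
  have hq2 : (0:ℝ) ≤ β * β - β - 1 := by linarith
  have hq3 : (0:ℝ) ≤ β * β * β - (β + 1) * (β + 1) := by nlinarith
  -- clear the 1/β in hlight
  have hl : β * (a + b + c) < (β * β + β + 1) * d := by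
    have he : β * (1 + β + 1 / β) = β * β + β + 1 := by
      field_simp
      ring
    calc β * (a + b + c) < β * ((1 + β + 1 / β) * d) :=
          mul_lt_mul_of_pos_left hlight hβpos
      _ = (β * β + β + 1) * d := by rw [← mul_assoc, he]
  clear hα₀ hα₁ hβ hs2 hs1 hβge hlight
  -- unconditional facts
  have hba : b ≤ β * a := by linarith
  have hda : d ≤ β * a := by nlinarith [mul_nonneg hq2 (le_of_lt (lt_of_lt_of_le zero_lt_one ha))]
  have hcd : c ≤ β * d := by
    nlinarith [mul_nonneg hq2 (by linarith : (0:ℝ) ≤ c)]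
  by_cases hA : b + c ≤ β * d
  · by_cases hB : b + c + d ≤ β * a
    · left
      refine ⟨⟨hA, ?_⟩, ?_, hB⟩
      · -- d ≤ β * (b + c)
        nlinarith [mul_nonneg hq2 (by linarith : (0:ℝ) ≤ b + c)]
      · -- a ≤ β * (b + c + d)
        nlinarith [mul_nonneg hβpos.le (by linarith : (0:ℝ) ≤ d)]
    · -- branch B : β * a < b + c + d
      push_neg at hB
      right
      have hab : a ≤ β * b := by
        nlinarith [mul_lt_mul_of_pos_left hB hβpos,
          mul_nonneg hq (by linarith : (0:ℝ) ≤ b)]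
      have hdc : d ≤ β * c := by
        nlinarith [mul_lt_mul_of_pos_left hheavy hβpos,
          mul_nonneg hq (by linarith : (0:ℝ) ≤ c)]
      refine ⟨⟨hab, hba⟩, ⟨hcd, hdc⟩, ⟨?_, ?_⟩⟩
      · nlinarith [mul_nonneg (by linarith : (0:ℝ) ≤ β + 1) (by linarith : (0:ℝ) ≤ β * c - d)]
      · have he : β * (a + b) = β * a + β * b := by ring
        linarith
  · -- branch A : β * d < b + c
    push_neg at hA
    right
    have hab : a ≤ β * b := by
      have k1 : β * (β * a) < (β + 1) * (b + c) := by
        nlinarith [mul_lt_mul_of_pos_left hl hβpos,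
          mul_lt_mul_of_pos_left hA (by positivity : (0:ℝ) < β * β + β + 1)]
      have k2 : (β + 1) * (b + c) ≤ (β + 1) * ((1 + β) * b) := by
        nlinarith [mul_le_mul_of_nonneg_left h1 (by linarith : (0:ℝ) ≤ β + 1)]
      have k3 : β * (β * a) < β * (β * (β * b)) := by
        nlinarith [mul_nonneg hq3 (by linarith : (0:ℝ) ≤ b)]
      have k4 : β * a < β * (β * b) := lt_of_mul_lt_mul_left k3 hβpos.le
      exact le_of_lt (lt_of_mul_lt_mul_left k4 hβpos.le)
    have hdc : d ≤ β * c := by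
      have k1 : β * d < β * (β * c) := by
        nlinarith [mul_nonneg hq2 (by linarith : (0:ℝ) ≤ c)]
      exact le_of_lt (lt_of_mul_lt_mul_left k1 hβpos.le)
    refine ⟨⟨hab, hba⟩, ⟨hcd, hdc⟩, ⟨?_, ?_⟩⟩
    · nlinarith [mul_nonneg (by linarith : (0:ℝ) ≤ β + 1) (by linarith : (0:ℝ) ≤ β * c - d)]
    · have he : β * (a + b) = β * a + β * b := by ring
      linarith
end

section
/- In a treap on n keys with uniformly random independent priorities, if a key k has the t-th highest priority among all keys, then the expected depth of k in the treap is O(log t); specifically, the expected depth is at most c·(log t + 1) for some absolute constant c. -/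
open Finset

/-! ### Auxiliary lemmas -/

lemma fin_val_min {n : ℕ} (a b : Fin n) : ((min a b : Fin n) : ℕ) = min (a:ℕ) (b:ℕ) := by
  rcases le_total a b with h | h <;>
    simp [min_eq_left, min_eq_right, h, Fin.le_def.mp h]

lemma fin_val_max {n : ℕ} (a b : Fin n) : ((max a b : Fin n) : ℕ) = max (a:ℕ) (b:ℕ) := by
  rcases le_total a b with h | h <;>
    simp [max_eq_left, max_eq_right, h, Fin.le_def.mp h]

/-- Harmonic tail bound: `∑_{d=M+1}^N 1/d ≤ log N - log M`. -/
lemma harm_sum (M : ℕ) (hM : 1 ≤ M) : ∀ N, M ≤ N →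
    ∑ d ∈ Finset.Ioc M N, (1 / (d:ℝ)) ≤ Real.log N - Real.log M := by
  refine Nat.le_induction (by simp) ?_
  intro N hMN ih
  rw [Finset.sum_Ioc_succ_top hMN]
  have hN : (0:ℝ) < N := by exact_mod_cast lt_of_lt_of_le hM hMN
  have hN1 : (0:ℝ) < (N:ℝ) + 1 := by linarith
  have h1 : Real.log ((N:ℝ)/((N:ℝ)+1)) ≤ (N:ℝ)/((N:ℝ)+1) - 1 :=
    Real.log_le_sub_one_of_pos (by positivity)
  rw [Real.log_div (ne_of_gt hN) (ne_of_gt hN1)] at h1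
  have h2 : (N:ℝ)/((N:ℝ)+1) - 1 = -(1/((N:ℝ)+1)) := by field_simp; ring
  push_cast
  rw [h2] at h1
  linarith

/-- The key analytic estimate: `∑_{d=1}^N min (1/d) (s/N) ≤ 2 + log (s+1)`. -/
lemma minsum (N s : ℕ) (hN : 1 ≤ N) :
    ∑ d ∈ Finset.Icc 1 N, min (1/(d:ℝ)) ((s:ℝ)/(N:ℝ)) ≤ 2 + Real.log (s+1) := by
  have hlog1 : (0:ℝ) ≤ Real.log (s+1) := by
    apply Real.log_nonneg; push_cast; linarith
  rcases Nat.eq_zero_or_pos s with rfl | hs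
  · have h0 : ∑ d ∈ Finset.Icc 1 N, min (1/(d:ℝ)) (((0:ℕ):ℝ)/(N:ℝ)) = 0 := by
      apply Finset.sum_eq_zero
      intro d hd
      have : (0:ℝ) ≤ 1/(d:ℝ) := by positivity
      simp [min_eq_right this]
    rw [h0]; linarith
  · set M : ℕ := if N ≤ s then 1 else N / s with hM
    have hM1 : 1 ≤ M := by
      rw [hM]; split
      · exact le_refl 1
      · exact Nat.one_le_div_iff hs |>.mpr (by omega)
    have hMN : M ≤ N := by
      rw [hM]; split
      · exact hN
      · exact Nat.div_le_self N s
    have hsplit : Finset.Icc 1 N = Finset.Icc 1 M ∪ Finset.Ioc M N := by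
      ext x; simp only [Finset.mem_Icc, Finset.mem_union, Finset.mem_Ioc]; omega
    have hdisj : Disjoint (Finset.Icc 1 M) (Finset.Ioc M N) := by
      rw [Finset.disjoint_left]
      intro a ha hb
      simp only [Finset.mem_Icc] at ha
      simp only [Finset.mem_Ioc] at hb
      omega
    rw [hsplit, Finset.sum_union hdisj]
    have hb1 : ∑ d ∈ Finset.Icc 1 M, min (1/(d:ℝ)) ((s:ℝ)/(N:ℝ)) ≤ 1 := by
      rw [hM]; split_ifs with h
      · simp only [Finset.Icc_self, Finset.sum_singleton]
        exact le_trans (min_le_left _ _) (by norm_num)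
      · calc ∑ d ∈ Finset.Icc 1 (N/s), min (1/(d:ℝ)) ((s:ℝ)/(N:ℝ))
            ≤ ∑ d ∈ Finset.Icc 1 (N/s), (s:ℝ)/(N:ℝ) :=
              Finset.sum_le_sum (fun d _ => min_le_right _ _)
          _ = (N/s : ℕ) * ((s:ℝ)/(N:ℝ)) := by
              rw [Finset.sum_const, Nat.card_Icc]; simp
          _ ≤ 1 := by
              have hNs : ((N/s : ℕ):ℝ) * (s:ℝ) ≤ (N:ℝ) := by
                exact_mod_cast Nat.div_mul_le_self N s
              have hNp : (0:ℝ) < N := by exact_mod_cast hN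
              rw [mul_div_assoc']
              exact (div_le_one hNp).mpr hNs
    have hb2 : ∑ d ∈ Finset.Ioc M N, min (1/(d:ℝ)) ((s:ℝ)/(N:ℝ)) ≤ 1 + Real.log (s+1) := by
      have hlogs : Real.log N - Real.log M ≤ 1 + Real.log s := by
        have hNlt : (N:ℝ) ≤ 2 * s * M := by
          rw [hM]; split_ifs with h
          · push_cast; nlinarith [hs, (by exact_mod_cast h : (N:ℝ) ≤ (s:ℝ))]
          · have hd := Nat.div_add_mod N s
            have hm := Nat.mod_lt N hs
            have h1 : N < s * (N/s) + s := by omega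
            have hds : 1 ≤ N / s := Nat.one_le_div_iff hs |>.mpr (by omega)
            have : N ≤ 2 * s * (N/s) := by nlinarith
            exact_mod_cast this
        have hMpos : (0:ℝ) < M := by exact_mod_cast hM1
        have hNpos : (0:ℝ) < N := by exact_mod_cast hN
        have hspos : (0:ℝ) < s := by exact_mod_cast hs
        have := Real.log_le_log hNpos hNlt
        rw [Real.log_mul (by positivity) (ne_of_gt hMpos),
          Real.log_mul (by norm_num) (ne_of_gt hspos)] at this
        have hlog2 : Real.log 2 ≤ 1 := by
          have := Real.log_le_sub_one_of_pos (show (0:ℝ) < 2 by norm_num)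
          linarith
        linarith
      calc ∑ d ∈ Finset.Ioc M N, min (1/(d:ℝ)) ((s:ℝ)/(N:ℝ))
          ≤ ∑ d ∈ Finset.Ioc M N, 1/(d:ℝ) :=
            Finset.sum_le_sum (fun d _ => min_le_left _ _)
        _ ≤ Real.log N - Real.log M := harm_sum M hM1 N hMN
        _ ≤ 1 + Real.log s := hlogs
        _ ≤ 1 + Real.log (s+1) := by
            have h1 : (s:ℝ) ≤ (s:ℝ)+1 := by linarith
            have := Real.log_le_log (by exact_mod_cast hs) h1
            linarith
    linarith

/-- A 2-to-1 reindexing: summing a nonnegative function of the distance to `k`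
over all keys `j ≠ k` is at most twice the sum over distances `1..n-1`. -/
lemma sum_dist {n : ℕ} (k : Fin n) (g : ℕ → ℝ) (hg : ∀ d, 0 ≤ g d) :
    ∑ j ∈ univ.filter (fun j : Fin n => j ≠ k), g (Nat.dist (j:ℕ) (k:ℕ))
      ≤ 2 * ∑ d ∈ Finset.Icc 1 (n-1), g d := by
  classical
  have hsub : ∀ (s : Finset (Fin n)), Set.InjOn (fun j : Fin n => Nat.dist (j:ℕ) (k:ℕ)) s →
      (∀ j ∈ s, Nat.dist (j:ℕ) (k:ℕ) ∈ Finset.Icc 1 (n-1)) →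
      ∑ j ∈ s, g (Nat.dist (j:ℕ) (k:ℕ)) ≤ ∑ d ∈ Finset.Icc 1 (n-1), g d := by
    intro s hinj hmem
    rw [← Finset.sum_image (f := g) (g := fun j : Fin n => Nat.dist (j:ℕ) (k:ℕ))
      (fun x hx y hy => hinj (by simpa using hx) (by simpa using hy))]
    apply Finset.sum_le_sum_of_subset_of_nonneg
    · intro d hd
      rw [Finset.mem_image] at hd
      obtain ⟨j, hj, rfl⟩ := hd
      exact hmem j hj
    · intro d _ _; exact hg d
  have hsplit : univ.filter (fun j : Fin n => j ≠ k)
      = univ.filter (fun j : Fin n => j < k) ∪ univ.filter (fun j : Fin n => k < j) := by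
    ext j
    simp only [Finset.mem_filter, Finset.mem_univ, true_and, Finset.mem_union, ne_eq]
    constructor
    · intro h; exact lt_or_gt_of_ne h
    · rintro (h | h) <;> [exact ne_of_lt h; exact ne_of_gt h]
  have hdisj : Disjoint (univ.filter (fun j : Fin n => j < k))
      (univ.filter (fun j : Fin n => k < j)) := by
    rw [Finset.disjoint_left]
    intro a ha hb
    simp only [Finset.mem_filter] at ha hb
    exact absurd (lt_trans ha.2 hb.2) (lt_irrefl a)
  rw [hsplit, Finset.sum_union hdisj, two_mul]
  gcongr ?_ + ?_
  · apply hsub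
    · intro x hx y hy hxy
      simp only [Finset.coe_filter, Set.mem_setOf_eq, Finset.mem_univ, true_and] at hx hy
      rw [Fin.lt_def] at hx hy
      simp only [Nat.dist] at hxy
      exact Fin.ext (by omega)
    · intro j hj
      simp only [Finset.mem_filter, Finset.mem_univ, true_and, Fin.lt_def] at hj
      have := k.isLt
      simp only [Finset.mem_Icc, Nat.dist]
      omega
  · apply hsub
    · intro x hx y hy hxy
      simp only [Finset.coe_filter, Set.mem_setOf_eq, Finset.mem_univ, true_and] at hx hy
      rw [Fin.lt_def] at hx hy
      simp only [Nat.dist] at hxy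
      exact Fin.ext (by omega)
    · intro j hj
      simp only [Finset.mem_filter, Finset.mem_univ, true_and, Fin.lt_def] at hj
      have := j.isLt
      simp only [Finset.mem_Icc, Nat.dist]
      omega

/-- `j` is an ancestor of `i` (or `j = i`) in the treap determined by the
priorities `p`: `j` has the maximum priority among all keys lying between `i`
and `j` inclusive. -/
def IsTreapAnc {n : ℕ} (p : Fin n → ℕ) (i j : Fin n) : Prop :=
  ∀ m : Fin n, min i j ≤ m → m ≤ max i j → p m ≤ p j

/-- The depth of key `i` in the treap with priorities `p` (the root has
depth 0): the number of proper ancestors of `i`. -/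
noncomputable def treapDepth {n : ℕ} (p : Fin n → ℕ) (i : Fin n) : ℕ :=
  Nat.card {j : Fin n // j ≠ i ∧ IsTreapAnc p i j}

instance {n : ℕ} (p : Fin n → ℕ) (i j : Fin n) : Decidable (IsTreapAnc p i j) := by
  unfold IsTreapAnc; infer_instance

lemma depth_eq {n : ℕ} (p : Fin n → ℕ) (k : Fin n) :
    treapDepth p k = (univ.filter (fun j => j ≠ k ∧ IsTreapAnc p k j)).card := by
  rw [treapDepth, Nat.card_eq_fintype_card, Fintype.card_subtype]

lemma anc_lt {n : ℕ} (π : Equiv.Perm (Fin n)) {k j : Fin n} (hjk : j ≠ k)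
    (h : IsTreapAnc (fun m => (π m : ℕ)) k j) : (π k : ℕ) < (π j : ℕ) := by
  have h1 : (π k : ℕ) ≤ (π j : ℕ) := h k (min_le_left _ _) (le_max_left _ _)
  refine lt_of_le_of_ne h1 (fun e => hjk ?_)
  exact (π.injective (Fin.val_injective e)).symm

/-- Position-swapping injection: the number of permutations making `j` an
ancestor of `k`, times the size of the open "interval" between them, is at
most the number of all permutations with the given priority of `k`. -/
lemma cardA {n : ℕ} (t : ℕ) (k j : Fin n) (hjk : j ≠ k) :
    (univ.filter (fun π : Equiv.Perm (Fin n) =>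
        (π k : ℕ) = n - t ∧ IsTreapAnc (fun m => (π m : ℕ)) k j)).card
      * ((Finset.Icc (min k j) (max k j)).erase k).card
    ≤ (univ.filter (fun π : Equiv.Perm (Fin n) => (π k : ℕ) = n - t)).card := by
  classical
  rw [← Finset.card_product]
  apply Finset.card_le_card_of_injOn (fun q => (Equiv.swap j q.2).trans q.1)
  · rintro ⟨π, m⟩ hq
    simp only [Finset.mem_product, Finset.mem_filter, Finset.mem_erase, Finset.mem_univ,
      true_and, Finset.mem_coe] at hq ⊢
    obtain ⟨⟨hπk, _⟩, hmk, _⟩ := hq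
    rw [Equiv.trans_apply, Equiv.swap_apply_of_ne_of_ne hjk.symm (Ne.symm hmk)]
    exact hπk
  · have key : ∀ (π : Equiv.Perm (Fin n)) (m : Fin n),
        IsTreapAnc (fun x => (π x : ℕ)) k j →
        m ∈ Finset.Icc (min k j) (max k j) →
        ∀ x ∈ Finset.Icc (min k j) (max k j), x ≠ m →
          ((((Equiv.swap j m).trans π) x : ℕ)) < ((((Equiv.swap j m).trans π) m : ℕ)) := by
      intro π m hanc hm x hx hxm
      rw [Equiv.trans_apply, Equiv.trans_apply, Equiv.swap_apply_right]
      set y := Equiv.swap j m x with hy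
      have hyI : y ∈ Finset.Icc (min k j) (max k j) := by
        rcases eq_or_ne x j with rfl | hxj
        · rw [hy, Equiv.swap_apply_left]; exact hm
        · rcases eq_or_ne x m with rfl | hxm2
          · exact absurd rfl hxm
          · rw [hy, Equiv.swap_apply_of_ne_of_ne hxj hxm2]; exact hx
      have hyj : y ≠ j := fun e => hxm ((Equiv.swap j m).injective
        (by rw [← hy, e, Equiv.swap_apply_right]))
      rw [Finset.mem_Icc] at hyI
      have hle : (π y : ℕ) ≤ (π j : ℕ) := hanc y hyI.1 hyI.2
      refine lt_of_le_of_ne hle (fun e => hyj ?_)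
      exact π.injective (Fin.val_injective e)
    rintro ⟨π₁, m₁⟩ h₁ ⟨π₂, m₂⟩ h₂ heq
    simp only [Finset.coe_filter, Set.mem_setOf_eq, Finset.mem_product, Finset.mem_filter,
      Finset.mem_erase, Finset.mem_univ, true_and, Finset.mem_coe] at h₁ h₂
    obtain ⟨⟨hπ₁k, hanc₁⟩, hm₁k, hm₁I⟩ := h₁
    obtain ⟨⟨hπ₂k, hanc₂⟩, hm₂k, hm₂I⟩ := h₂
    simp only at heq
    have hmm : m₁ = m₂ := by
      by_contra hne
      have h1 := key π₁ m₁ hanc₁ hm₁I m₂ hm₂I (Ne.symm hne)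
      have h2 := key π₂ m₂ hanc₂ hm₂I m₁ hm₁I hne
      rw [← heq] at h2
      omega
    subst hmm
    refine Prod.ext ?_ rfl
    ext x
    have := DFunLike.congr_fun heq (Equiv.swap j m₁ x)
    exact congrArg Fin.val
      (by simpa [Equiv.trans_apply, Equiv.swap_apply_self] using this)

/-- Value-swapping injection: ancestors of `k` must have one of the `t-1`
priorities above that of `k`. -/
lemma cardB {n : ℕ} (t : ℕ) (k j : Fin n) (hjk : j ≠ k) :
    (univ.filter (fun π : Equiv.Perm (Fin n) =>
        (π k : ℕ) = n - t ∧ IsTreapAnc (fun m => (π m : ℕ)) k j)).card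
      * (univ.filter (fun v : Fin n => (v : ℕ) ≠ n - t)).card
    ≤ (univ.filter (fun π : Equiv.Perm (Fin n) => (π k : ℕ) = n - t)).card
      * (univ.filter (fun w : Fin n => n - t < (w : ℕ))).card := by
  classical
  rw [← Finset.card_product, ← Finset.card_product]
  apply Finset.card_le_card_of_injOn
    (fun q => (q.1.trans (Equiv.swap (q.1 j) q.2), q.1 j))
  · rintro ⟨π, v⟩ hq
    simp only [Finset.mem_product, Finset.mem_filter, Finset.mem_univ, true_and, Finset.mem_coe] at hq ⊢
    obtain ⟨⟨hπk, hanc⟩, hv⟩ := hq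
    have hlt : (π k : ℕ) < (π j : ℕ) := anc_lt π hjk hanc
    constructor
    · rw [Equiv.trans_apply, Equiv.swap_apply_of_ne_of_ne]
      · exact hπk
      · exact fun e => by omega
      · exact fun e => hv (by rw [← e, hπk])
    · omega
  · rintro ⟨π₁, v₁⟩ h₁ ⟨π₂, v₂⟩ h₂ heq
    simp only [Finset.coe_filter, Finset.mem_coe, Finset.mem_product, Finset.mem_filter,
      Finset.mem_univ, true_and, Set.mem_setOf_eq] at h₁ h₂
    simp only [Prod.mk.injEq] at heq
    obtain ⟨heq1, heq2⟩ := heq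
    have hv : v₁ = v₂ := by
      have e1 := DFunLike.congr_fun heq1 j
      rw [Equiv.trans_apply, Equiv.trans_apply, heq2, Equiv.swap_apply_left,
        Equiv.swap_apply_left] at e1
      exact e1
    subst hv
    refine Prod.ext ?_ rfl
    simp only
    ext x
    have e1 := DFunLike.congr_fun heq1 x
    rw [Equiv.trans_apply, Equiv.trans_apply, heq2] at e1
    exact congrArg Fin.val ((Equiv.swap (π₂ j) v₁).injective e1)

lemma cardV {n t : ℕ} (ht : 1 ≤ t) (htn : t ≤ n) :
    (univ.filter (fun v : Fin n => (v : ℕ) ≠ n - t)).card = n - 1 := by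
  have hlt : n - t < n := by omega
  have h : (univ.filter (fun v : Fin n => (v : ℕ) ≠ n - t)) =
      univ.erase ⟨n - t, hlt⟩ := by
    ext v
    simp only [Finset.mem_filter, Finset.mem_univ, true_and, Finset.mem_erase, ne_eq,
      Fin.ext_iff]
    tauto
  rw [h, Finset.card_erase_of_mem (Finset.mem_univ _)]
  simp

lemma cardW {n t : ℕ} (ht : 1 ≤ t) (htn : t ≤ n) :
    (univ.filter (fun w : Fin n => n - t < (w : ℕ))).card = t - 1 := by
  have hlt : n - t < n := by omega
  have h : (univ.filter (fun w : Fin n => n - t < (w : ℕ))) =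
      Finset.Ioi (⟨n - t, hlt⟩ : Fin n) := by
    ext w
    simp [Finset.mem_Ioi, Fin.lt_def]
  rw [h, Fin.card_Ioi]
  show n - 1 - (n - t) = t - 1
  omega

lemma cardS {n : ℕ} (k j : Fin n) :
    ((Finset.Icc (min k j) (max k j)).erase k).card = Nat.dist (j:ℕ) (k:ℕ) := by
  have hk : k ∈ Finset.Icc (min k j) (max k j) :=
    Finset.mem_Icc.mpr ⟨min_le_left _ _, le_max_left _ _⟩
  rw [Finset.card_erase_of_mem hk, Fin.card_Icc, fin_val_min, fin_val_max, Nat.dist]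
  omega

lemma sum_depth {n t : ℕ} (k : Fin n) :
    ∑ π ∈ univ.filter (fun π : Equiv.Perm (Fin n) => (π k : ℕ) = n - t),
      treapDepth (fun m => (π m : ℕ)) k
    = ∑ j ∈ univ, (univ.filter (fun π : Equiv.Perm (Fin n) =>
        (π k : ℕ) = n - t ∧ (j ≠ k ∧ IsTreapAnc (fun m => (π m : ℕ)) k j))).card := by
  classical
  simp only [depth_eq, Finset.card_filter]
  rw [Finset.sum_comm]
  refine Finset.sum_congr rfl fun j _ => ?_
  rw [Finset.sum_filter]
  simp only [← ite_and]

/-- In a treap on `n` keys with uniformly random priorities (modeled as a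
uniformly random permutation `π` assigning distinct priorities, larger value =
higher priority), if key `k` has the `t`-th highest priority then its expected
depth is at most `c·(log t + 1)` for an absolute constant `c`. -/
theorem treap_expected_depth :
    ∃ c : ℝ, 0 < c ∧ ∀ (n t : ℕ), 1 ≤ t → t ≤ n → ∀ k : Fin n,
      (∑ π ∈ Finset.univ.filter
          (fun π : Equiv.Perm (Fin n) => (π k : ℕ) = n - t),
        (treapDepth (fun j => (π j : ℕ)) k : ℝ)) /
        (Finset.univ.filter
          (fun π : Equiv.Perm (Fin n) => (π k : ℕ) = n - t)).card
      ≤ c * (Real.log t + 1) := by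
  classical
  refine ⟨4, by norm_num, ?_⟩
  intro n t ht htn k
  have hlogt : (0:ℝ) ≤ Real.log t := by
    apply Real.log_nonneg; exact_mod_cast ht
  set F := univ.filter (fun π : Equiv.Perm (Fin n) => (π k : ℕ) = n - t) with hFdef
  have hFne : F.Nonempty := by
    refine ⟨Equiv.swap k ⟨n - t, by omega⟩, ?_⟩
    simp [hFdef, Equiv.swap_apply_left]
  have hFpos : (0:ℝ) < F.card := by exact_mod_cast Finset.card_pos.mpr hFne
  rw [div_le_iff₀ hFpos]
  -- rewrite the sum of depths via Fubini
  have hswap : (∑ π ∈ F, (treapDepth (fun j => (π j : ℕ)) k : ℝ))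
      = ∑ j ∈ univ, ((univ.filter (fun π : Equiv.Perm (Fin n) =>
          (π k : ℕ) = n - t ∧ (j ≠ k ∧ IsTreapAnc (fun m => (π m : ℕ)) k j))).card : ℝ) := by
    rw [← Nat.cast_sum, ← Nat.cast_sum]
    exact_mod_cast congrArg (Nat.cast (R := ℝ)) (sum_depth (t := t) k)
  rw [hswap]
  -- drop the `j = k` term
  have hdrop : ∑ j ∈ univ, ((univ.filter (fun π : Equiv.Perm (Fin n) =>
          (π k : ℕ) = n - t ∧ (j ≠ k ∧ IsTreapAnc (fun m => (π m : ℕ)) k j))).card : ℝ)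
      = ∑ j ∈ univ.filter (fun j : Fin n => j ≠ k),
          ((univ.filter (fun π : Equiv.Perm (Fin n) =>
          (π k : ℕ) = n - t ∧ (j ≠ k ∧ IsTreapAnc (fun m => (π m : ℕ)) k j))).card : ℝ) := by
    symm
    apply Finset.sum_subset (Finset.filter_subset _ _)
    intro j _ hj
    simp only [Finset.mem_filter, Finset.mem_univ, true_and, not_not] at hj
    subst hj
    norm_num
  rw [hdrop]
  set r : ℝ := ((t-1 : ℕ) : ℝ) / ((n-1 : ℕ) : ℝ) with hr
  have hrnn : 0 ≤ r := by positivity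
  -- per-key bound
  have perj : ∀ j : Fin n, j ≠ k →
      ((univ.filter (fun π : Equiv.Perm (Fin n) =>
          (π k : ℕ) = n - t ∧ (j ≠ k ∧ IsTreapAnc (fun m => (π m : ℕ)) k j))).card : ℝ)
      ≤ (F.card : ℝ) * min (1 / (Nat.dist (j:ℕ) (k:ℕ) : ℝ)) r := by
    intro j hjk
    have hAA : (univ.filter (fun π : Equiv.Perm (Fin n) =>
          (π k : ℕ) = n - t ∧ (j ≠ k ∧ IsTreapAnc (fun m => (π m : ℕ)) k j))).card
        ≤ (univ.filter (fun π : Equiv.Perm (Fin n) =>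
          (π k : ℕ) = n - t ∧ IsTreapAnc (fun m => (π m : ℕ)) k j)).card := by
      apply Finset.card_le_card
      intro π hπ
      simp only [Finset.mem_filter, Finset.mem_univ, true_and] at hπ ⊢
      tauto
    have hvne : (j:ℕ) ≠ (k:ℕ) := fun e => hjk (Fin.ext e)
    have hd1 : 1 ≤ Nat.dist (j:ℕ) (k:ℕ) := by
      simp only [Nat.dist]; omega
    have hn2 : 2 ≤ n := by
      have := j.isLt; have := k.isLt; omega
    have hdpos : (0:ℝ) < (Nat.dist (j:ℕ) (k:ℕ) : ℝ) := by exact_mod_cast hd1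
    have hA1 := cardA t k j hjk
    rw [cardS] at hA1
    have hA2 := cardB t k j hjk
    rw [cardV ht htn, cardW ht htn] at hA2
    have b1 : ((univ.filter (fun π : Equiv.Perm (Fin n) =>
          (π k : ℕ) = n - t ∧ IsTreapAnc (fun m => (π m : ℕ)) k j)).card : ℝ)
        ≤ (F.card : ℝ) * (1 / (Nat.dist (j:ℕ) (k:ℕ) : ℝ)) := by
      rw [mul_one_div, le_div_iff₀ hdpos]
      exact_mod_cast hA1
    have b2 : ((univ.filter (fun π : Equiv.Perm (Fin n) =>
          (π k : ℕ) = n - t ∧ IsTreapAnc (fun m => (π m : ℕ)) k j)).card : ℝ)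
        ≤ (F.card : ℝ) * r := by
      have hn1pos : (0:ℝ) < ((n-1 : ℕ) : ℝ) := by
        have : 1 ≤ n - 1 := by omega
        exact_mod_cast this
      have heq : (F.card : ℝ) * r = ((F.card : ℝ) * ((t-1 : ℕ) : ℝ)) / ((n-1 : ℕ) : ℝ) := by
        rw [hr]; ring
      rw [heq, le_div_iff₀ hn1pos]
      exact_mod_cast hA2
    have hcast : ((univ.filter (fun π : Equiv.Perm (Fin n) =>
          (π k : ℕ) = n - t ∧ (j ≠ k ∧ IsTreapAnc (fun m => (π m : ℕ)) k j))).card : ℝ)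
        ≤ ((univ.filter (fun π : Equiv.Perm (Fin n) =>
          (π k : ℕ) = n - t ∧ IsTreapAnc (fun m => (π m : ℕ)) k j)).card : ℝ) := by
      exact_mod_cast hAA
    rcases le_total (1 / (Nat.dist (j:ℕ) (k:ℕ) : ℝ)) r with h | h
    · rw [min_eq_left h]; exact le_trans hcast b1
    · rw [min_eq_right h]; exact le_trans hcast b2
  -- sum the per-key bounds
  calc ∑ j ∈ univ.filter (fun j : Fin n => j ≠ k),
          ((univ.filter (fun π : Equiv.Perm (Fin n) =>
          (π k : ℕ) = n - t ∧ (j ≠ k ∧ IsTreapAnc (fun m => (π m : ℕ)) k j))).card : ℝ)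
      ≤ ∑ j ∈ univ.filter (fun j : Fin n => j ≠ k),
          (F.card : ℝ) * min (1 / (Nat.dist (j:ℕ) (k:ℕ) : ℝ)) r := by
        apply Finset.sum_le_sum
        intro j hj
        simp only [Finset.mem_filter, Finset.mem_univ, true_and] at hj
        exact perj j hj
    _ = (F.card : ℝ) * ∑ j ∈ univ.filter (fun j : Fin n => j ≠ k),
          min (1 / (Nat.dist (j:ℕ) (k:ℕ) : ℝ)) r := by
        rw [Finset.mul_sum]
    _ ≤ (F.card : ℝ) * (2 * ∑ d ∈ Finset.Icc 1 (n-1), min (1/(d:ℝ)) r) := by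
        apply mul_le_mul_of_nonneg_left _ (le_of_lt hFpos)
        exact sum_dist k (fun d => min (1/(d:ℝ)) r)
          (fun d => le_min (by positivity) hrnn)
    _ ≤ 4 * (Real.log t + 1) * (F.card : ℝ) := by
        rcases Nat.eq_zero_or_pos (n - 1) with h0 | hn1
        · have hic : Finset.Icc 1 (n-1) = ∅ := Finset.Icc_eq_empty (by omega)
          rw [hic, Finset.sum_empty, mul_zero, mul_zero]
          nlinarith [hlogt, hFpos]
        · have hmin := minsum (n-1) (t-1) hn1
          rw [hr]
          have ht1 : ((t-1 : ℕ) : ℝ) + 1 = (t : ℝ) := by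
            have : (t - 1) + 1 = t := Nat.sub_add_cancel ht
            exact_mod_cast congrArg (Nat.cast (R := ℝ)) this
          rw [ht1] at hmin
          have step : 2 * ∑ d ∈ Finset.Icc 1 (n-1),
              min (1/(d:ℝ)) (((t-1 : ℕ) : ℝ) / ((n-1 : ℕ) : ℝ)) ≤ 2 * (2 + Real.log t) :=
            by linarith
          have final : (F.card : ℝ) * (2 * (2 + Real.log t))
              ≤ 4 * (Real.log t + 1) * (F.card : ℝ) := by nlinarith
          calc (F.card : ℝ) * (2 * ∑ d ∈ Finset.Icc 1 (n-1),
                min (1/(d:ℝ)) (((t-1 : ℕ) : ℝ) / ((n-1 : ℕ) : ℝ)))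
              ≤ (F.card : ℝ) * (2 * (2 + Real.log t)) :=
                mul_le_mul_of_nonneg_left step (le_of_lt hFpos)
            _ ≤ 4 * (Real.log t + 1) * (F.card : ℝ) := final
end

section
/- In an AVL tree with n nodes, if layer i consists of all nodes of height i+1 (rank i), then the number s_i of nodes in layer i satisfies s_i ≤ n / 2^⌊i/2⌋. -/
namespace BT

/-- The number of nodes of `t` whose subtree has height exactly `h`. -/
def countOfHeight {α : Type} (h : ℕ) : BT α → ℕ
  | leaf => 0
  | node l v r =>
      (if height (node l v r) = h then 1 else 0) + countOfHeight h l + countOfHeight h r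

end BT

namespace BT

theorem two_pow_split (m : ℕ) (hm : 2 ≤ m) :
    2 ^ (m / 2) ≤ 2 ^ ((m - 1) / 2) + 2 ^ ((m - 2) / 2) := by
  rcases Nat.even_or_odd m with ⟨k, hk⟩ | ⟨k, hk⟩
  · have h1 : m / 2 = k := by omega
    have h2 : (m - 1) / 2 = k - 1 := by omega
    have h3 : (m - 2) / 2 = k - 1 := by omega
    rw [h1, h2, h3]
    have : 2 ^ k = 2 ^ (k - 1) + 2 ^ (k - 1) := by
      rw [← two_mul, ← pow_succ']
      congr 1
      omega
    omega
  · have h1 : m / 2 = k := by omega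
    have h2 : (m - 1) / 2 = k := by omega
    rw [h1, h2]
    exact Nat.le_add_right _ _

theorem avl_size_lb {α : Type} : ∀ (t : BT α), AVL t →
    2 ^ ((height t - 1) / 2) ≤ size t + (1 - height t)
  | leaf, _ => by simp [height, size]
  | node l v r, ⟨hal, har, hb1, hb2⟩ => by
    have IHl := avl_size_lb l hal
    have IHr := avl_size_lb r har
    simp only [height, size]
    have e1 : max (height l) (height r) + 1 - 1 = max (height l) (height r) := by omega
    have e2 : 1 - (max (height l) (height r) + 1) = 0 := by omega
    rw [e1, e2, Nat.add_zero]
    set m := max (height l) (height r) with hm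
    rcases Nat.lt_or_ge m 2 with h2 | h2
    · have : m / 2 = 0 := by omega
      rw [this]
      omega
    · have key := two_pow_split m h2
      rcases le_total (height l) (height r) with hle | hle
      · have hrm : height r = m := by omega
        have hR : 2 ^ ((m - 1) / 2) ≤ size r := by
          rw [hrm] at IHr; omega
        have hL : 2 ^ ((m - 2) / 2) ≤ size l := by
          have hl1 : 1 ≤ height l := by omega
          have hmono : 2 ^ ((m - 2) / 2) ≤ 2 ^ ((height l - 1) / 2) :=
            Nat.pow_le_pow_right (by norm_num) (by omega)
          omega
        omega
      · have hrm : height l = m := by omega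
        have hR : 2 ^ ((m - 1) / 2) ≤ size l := by
          rw [hrm] at IHl; omega
        have hL : 2 ^ ((m - 2) / 2) ≤ size r := by
          have hl1 : 1 ≤ height r := by omega
          have hmono : 2 ^ ((m - 2) / 2) ≤ 2 ^ ((height r - 1) / 2) :=
            Nat.pow_le_pow_right (by norm_num) (by omega)
          omega
        omega

theorem count_zero {α : Type} : ∀ (t : BT α) (h : ℕ), height t < h → countOfHeight h t = 0
  | leaf, _, _ => rfl
  | node l v r, h, hh => by
    simp only [countOfHeight]
    have hn : height (node l v r) ≠ h := Nat.ne_of_lt hh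
    have hl : height l < h := by simp only [height] at hh ⊢; omega
    have hr : height r < h := by simp only [height] at hh ⊢; omega
    rw [if_neg hn, count_zero l h hl, count_zero r h hr]

theorem count_mul_le {α : Type} : ∀ (t : BT α), AVL t → ∀ i : ℕ,
    2 ^ (i / 2) * countOfHeight (i + 1) t ≤ size t
  | leaf, _, i => by simp [countOfHeight, size]
  | node l v r, ⟨hal, har, hb1, hb2⟩, i => by
    by_cases hh : height (node l v r) = i + 1
    · have hl0 : countOfHeight (i + 1) l = 0 := by
        apply count_zero
        simp only [height] at hh ⊢
        omega
      have hr0 : countOfHeight (i + 1) r = 0 := by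
        apply count_zero
        simp only [height] at hh ⊢
        omega
      have hsz := avl_size_lb (node l v r) ⟨hal, har, hb1, hb2⟩
      rw [hh] at hsz
      simp only [Nat.add_sub_cancel] at hsz
      have h10 : 1 - (i + 1) = 0 := by omega
      rw [h10, Nat.add_zero] at hsz
      simp only [countOfHeight, hh, if_pos, hl0, hr0]
      omega
    · have Hl := count_mul_le l hal i
      have Hr := count_mul_le r har i
      simp only [countOfHeight, size, if_neg hh]
      calc 2 ^ (i / 2) * (0 + countOfHeight (i + 1) l + countOfHeight (i + 1) r)
          = 2 ^ (i / 2) * countOfHeight (i + 1) l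
            + 2 ^ (i / 2) * countOfHeight (i + 1) r := by ring
        _ ≤ size l + size r := Nat.add_le_add Hl Hr
        _ ≤ size l + size r + 1 := Nat.le_succ _

end BT

/-- In an AVL tree with `n` nodes, the number `s_i` of nodes in layer `i`
(nodes of height `i+1`, i.e. rank `i`) satisfies `s_i ≤ n / 2^⌊i/2⌋`. -/
theorem avl_layer_size {α : Type} (t : BT α) (h : BT.AVL t) (i : ℕ) :
    (BT.countOfHeight (i + 1) t : ℝ) ≤ (BT.size t : ℝ) / 2 ^ (i / 2) := by
  rw [le_div_iff₀ (by positivity : (0 : ℝ) < 2 ^ (i / 2))]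
  have hn := BT.count_mul_le t h i
  calc (BT.countOfHeight (i + 1) t : ℝ) * 2 ^ (i / 2)
      = ((2 ^ (i / 2) * BT.countOfHeight (i + 1) t : ℕ) : ℝ) := by push_cast; ring
    _ ≤ ((BT.size t : ℕ) : ℝ) := by exact_mod_cast hn
end

section
/- For input sizes m ≤ n, the minimum number of comparisons needed by any comparison-based algorithm computing the union of two ordered sets of sizes m and n is log₂ C(m+n, m) = Θ(m · log₂(n/m + 1)). -/
/-- `a^b ≤ b^b * C(a,b)` for `b ≤ a`, i.e. `C(a,b) ≥ (a/b)^b`. -/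
lemma aux_pow_le_choose : ∀ (b a : ℕ), b ≤ a → a ^ b ≤ b ^ b * a.choose b := by
  intro b
  induction b with
  | zero => intro a _; simp
  | succ b ih =>
    intro a hba
    obtain ⟨c, rfl⟩ : ∃ c, a = c + 1 := ⟨a - 1, by omega⟩
    have hbc : b ≤ c := by omega
    have key : (c + 1) * c.choose b = (c + 1).choose (b + 1) * (b + 1) := by
      simpa using Nat.add_one_mul_choose_eq c b
    have IH := ih c hbc
    have hbb : 0 < b ^ b := by
      rcases Nat.eq_zero_or_pos b with rfl | h
      · simp
      · exact pow_pos h b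
    have hpos : 0 < (b + 1) * b ^ b := Nat.mul_pos b.succ_pos hbb
    apply Nat.le_of_mul_le_mul_right _ hpos
    calc (c + 1) ^ (b + 1) * ((b + 1) * b ^ b)
        = ((c + 1) * (b + 1)) * ((c + 1) * b) ^ b := by rw [mul_pow]; ring
      _ ≤ ((c + 1) * (b + 1)) * ((b + 1) * c) ^ b := by
          apply Nat.mul_le_mul_left
          apply Nat.pow_le_pow_left
          nlinarith
      _ = (b + 1) ^ (b + 1) * ((c + 1) * c ^ b) := by rw [mul_pow]; ring
      _ ≤ (b + 1) ^ (b + 1) * ((c + 1) * (b ^ b * c.choose b)) := by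
          apply Nat.mul_le_mul_left
          exact Nat.mul_le_mul_left _ IH
      _ = (b + 1) ^ (b + 1) * (b ^ b * ((c + 1) * c.choose b)) := by ring
      _ = (b + 1) ^ (b + 1) * (c + 1).choose (b + 1) * ((b + 1) * b ^ b) := by
          rw [key]; ring

/-- `m^m ≤ 3^m * m!`, i.e. `m! ≥ (m/3)^m`. -/
lemma aux_pow_le_factorial (m : ℕ) : (m : ℝ) ^ m ≤ 3 ^ m * m.factorial := by
  induction m with
  | zero => simp
  | succ m ih =>
    have hstep : ((m : ℝ) + 1) ^ m ≤ 3 * (m : ℝ) ^ m := by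
      rcases Nat.eq_zero_or_pos m with rfl | hm
      · norm_num
      · have hm0 : (0:ℝ) < m := by exact_mod_cast hm
        have h1 : (m : ℝ) + 1 ≤ m * Real.exp (1 / m) := by
          have := Real.add_one_le_exp (1 / (m : ℝ))
          calc (m : ℝ) + 1 = m * (1 / m + 1) := by field_simp; ring
            _ ≤ m * Real.exp (1 / m) := by nlinarith
        calc ((m : ℝ) + 1) ^ m ≤ (m * Real.exp (1 / m)) ^ m := by
              apply pow_le_pow_left₀ (by positivity) h1
          _ = (m : ℝ) ^ m * Real.exp (1 / m) ^ m := by rw [mul_pow]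
          _ = (m : ℝ) ^ m * Real.exp (m * (1 / m)) := by rw [Real.exp_nat_mul]
          _ = (m : ℝ) ^ m * Real.exp 1 := by
              rw [mul_one_div, div_self (ne_of_gt hm0)]
          _ ≤ 3 * (m : ℝ) ^ m := by
              have h3 : Real.exp 1 ≤ 3 := by
                have := Real.exp_one_lt_d9
                linarith
              have : (0:ℝ) ≤ (m : ℝ) ^ m := by positivity
              nlinarith
    have hmc : ((m + 1 : ℕ) : ℝ) = (m : ℝ) + 1 := by push_cast; ring
    calc ((m + 1 : ℕ) : ℝ) ^ (m + 1) = ((m : ℝ) + 1) * ((m : ℝ) + 1) ^ m := by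
          rw [hmc, pow_succ]; ring
      _ ≤ ((m : ℝ) + 1) * (3 * (m : ℝ) ^ m) := by
          apply mul_le_mul_of_nonneg_left hstep (by positivity)
      _ ≤ ((m : ℝ) + 1) * (3 * (3 ^ m * m.factorial)) := by
          apply mul_le_mul_of_nonneg_left _ (by positivity)
          exact mul_le_mul_of_nonneg_left ih (by norm_num)
      _ = 3 ^ (m + 1) * (m + 1).factorial := by
          rw [Nat.factorial_succ]; push_cast; ring

/-- Comparison-based lower bound for union: any comparison-based algorithm
(whose outcomes on the `C(m+n, m)` possible interleavings — identified with
the `m`-element subsets of `Fin (m+n)` — are encoded injectively by the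
sequence of `L` comparison results) must satisfy `C(m+n, m) ≤ 2^L`, i.e. use
at least `log₂ C(m+n, m)` comparisons; and this quantity is
`Θ(m·log₂(n/m + 1))` for `1 ≤ m ≤ n`. -/
theorem union_comparison_lower_bound :
    (∀ (m n L : ℕ) (g : {s : Finset (Fin (m + n)) // s.card = m} → (Fin L → Bool)),
      Function.Injective g → (m + n).choose m ≤ 2 ^ L) ∧
    (∃ c₁ c₂ : ℝ, 0 < c₁ ∧ 0 < c₂ ∧ ∀ m n : ℕ, 1 ≤ m → m ≤ n →
      c₁ * ((m : ℝ) * Real.logb 2 ((n : ℝ) / m + 1)) ≤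
        Real.logb 2 (((m + n).choose m : ℝ)) ∧
      Real.logb 2 (((m + n).choose m : ℝ)) ≤
        c₂ * ((m : ℝ) * Real.logb 2 ((n : ℝ) / m + 1))) := by
  constructor
  · intro m n L g hg
    calc (m + n).choose m
        = Fintype.card {s : Finset (Fin (m + n)) // s.card = m} := by
          rw [Fintype.card_finset_len, Fintype.card_fin]
      _ ≤ Fintype.card (Fin L → Bool) := Fintype.card_le_of_injective g hg
      _ = 2 ^ L := by simp
  · refine ⟨1, 3, one_pos, by norm_num, fun m n hm hmn => ?_⟩
    have hm0 : (0:ℝ) < m := by exact_mod_cast hm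
    set x : ℝ := (n : ℝ) / m + 1 with hxdef
    have hmn' : (m : ℝ) ≤ n := by exact_mod_cast hmn
    have hx2 : 2 ≤ x := by
      have : 1 ≤ (n : ℝ) / m := (one_le_div hm0).mpr hmn'
      simp only [hxdef]; linarith
    have hx0 : 0 < x := by linarith
    have hxeq : x = ((m : ℝ) + n) / m := by
      rw [hxdef]; field_simp; ring
    have hC0 : 0 < ((m + n).choose m : ℝ) := by
      exact_mod_cast Nat.choose_pos (Nat.le_add_right m n)
    -- lower bound : x^m ≤ C
    have hlow : x ^ m ≤ ((m + n).choose m : ℝ) := by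
      have h := aux_pow_le_choose m (m + n) (Nat.le_add_right m n)
      have h' : ((m + n : ℕ) : ℝ) ^ m ≤ (m : ℝ) ^ m * ((m + n).choose m : ℝ) := by
        exact_mod_cast h
      rw [hxeq, div_pow, div_le_iff₀ (by positivity)]
      calc ((m : ℝ) + n) ^ m = ((m + n : ℕ) : ℝ) ^ m := by push_cast; ring
        _ ≤ (m : ℝ) ^ m * ((m + n).choose m : ℝ) := h'
        _ = ((m + n).choose m : ℝ) * (m : ℝ) ^ m := by ring
    -- upper bound : C ≤ x^(3m)
    have hhigh : ((m + n).choose m : ℝ) ≤ x ^ (3 * m) := by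
      have h1 : ((m + n).choose m : ℝ) ≤ ((m + n : ℕ) : ℝ) ^ m / (m.factorial : ℝ) :=
        Nat.choose_le_pow_div m (m + n)
      have h2 := aux_pow_le_factorial m
      have hf0 : (0:ℝ) < m.factorial := by exact_mod_cast m.factorial_pos
      have h1' : ((m + n).choose m : ℝ) * (m.factorial : ℝ) ≤ ((m : ℝ) + n) ^ m := by
        have := (le_div_iff₀ hf0).mp h1
        calc ((m + n).choose m : ℝ) * (m.factorial : ℝ) ≤ ((m + n : ℕ) : ℝ) ^ m := this
          _ = ((m : ℝ) + n) ^ m := by push_cast; ring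
      have hmain : ((m + n).choose m : ℝ) * ((m.factorial : ℝ) * (m : ℝ) ^ m) ≤
          (3 * x) ^ m * ((m.factorial : ℝ) * (m : ℝ) ^ m) := by
        calc ((m + n).choose m : ℝ) * ((m.factorial : ℝ) * (m : ℝ) ^ m)
            = (((m + n).choose m : ℝ) * (m.factorial : ℝ)) * (m : ℝ) ^ m := by ring
          _ ≤ ((m : ℝ) + n) ^ m * (m : ℝ) ^ m :=
              mul_le_mul_of_nonneg_right h1' (by positivity)
          _ ≤ ((m : ℝ) + n) ^ m * (3 ^ m * (m.factorial : ℝ)) :=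
              mul_le_mul_of_nonneg_left h2 (by positivity)
          _ = (3 * x) ^ m * ((m.factorial : ℝ) * (m : ℝ) ^ m) := by
              rw [mul_pow, hxeq, div_pow]
              field_simp
      have h3 : ((m + n).choose m : ℝ) ≤ (3 * x) ^ m :=
        le_of_mul_le_mul_right hmain (by positivity)
      have hx4 : 4 ≤ x ^ 2 := by nlinarith
      calc ((m + n).choose m : ℝ) ≤ (3 * x) ^ m := h3
        _ ≤ (x ^ 3) ^ m := by
            apply pow_le_pow_left₀ (by positivity)
            nlinarith
        _ = x ^ (3 * m) := by rw [← pow_mul, mul_comm]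
    constructor
    · have := Real.logb_le_logb_of_le (b := 2) (by norm_num) (pow_pos hx0 m) hlow
      rw [Real.logb_pow] at this
      linarith
    · have := Real.logb_le_logb_of_le (b := 2) (by norm_num) hC0 hhigh
      rw [Real.logb_pow] at this
      push_cast at this
      linarith
end
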